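/- arXiv:1508.06488 — 3 statements merged into one kernel-verified Lean document; each statement's English description precedes it below -/
import Mathlib

section
/- Let f : D^d → D be holomorphic on the open unit polydisc with f(0) = 0. Then the sum of the absolute values of the partial derivatives of f at 0 is at most 1: ∑_{j=1}^d |∂f/∂z_j(0)| ≤ 1. -/
open scoped ComplexOrder

/-- The open unit polydisc in `ℂ^d`. -/
def polydisc (d : ℕ) : Set (Fin d → ℂ) := {z | ∀ j, ‖z j‖ < 1}

/-!
In the sup norm of `ℂ^d` the polydisc is the unit ball, so the Schwarz lemma for maps between
normed spaces bounds the operator norm of `f'(0)` by `1`. For a functional `ℓ` on `ℂ^d` with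
the sup norm, `∑ j, |ℓ e_j|` is the value `ℓ c` at the vector `c` of phases
`c_j = conj a_j / |a_j|` of the coefficients `a_j = ℓ e_j`, so it is at most `‖ℓ‖`.
-/

open Metric

theorem polydisc_eq_ball (d : ℕ) : polydisc d = ball 0 1 := by
  ext z
  simp [polydisc, pi_norm_lt_iff]

theorem RCLike.exists_norm_le_one_mul_eq_norm {𝕜 : Type*} [RCLike 𝕜] (a : 𝕜) :
    ∃ u : 𝕜, ‖u‖ ≤ 1 ∧ u * a = ‖a‖ := by
  refine ⟨starRingEnd 𝕜 a / ‖a‖, ?_, ?_⟩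
  · rw [norm_div, RCLike.norm_conj, RCLike.norm_ofReal, abs_norm]
    exact div_self_le_one _
  · rcases eq_or_ne a 0 with rfl | ha
    · simp
    · have hna : (‖a‖ : 𝕜) ≠ 0 := by exact_mod_cast norm_ne_zero_iff.mpr ha
      rw [div_mul_eq_mul_div, RCLike.conj_mul, sq, mul_div_cancel_right₀ _ hna]

theorem ContinuousLinearMap.sum_norm_apply_single_le_opNorm {𝕜 ι : Type*} [RCLike 𝕜]
    [Fintype ι] [DecidableEq ι] (ℓ : (ι → 𝕜) →L[𝕜] 𝕜) :
    ∑ j, ‖ℓ (Pi.single j 1)‖ ≤ ‖ℓ‖ := by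
  choose u hu_norm hu_mul using fun j =>
    RCLike.exists_norm_le_one_mul_eq_norm (ℓ (Pi.single j 1))
  have hu : ‖u‖ ≤ 1 := (pi_norm_le_iff_of_nonneg zero_le_one).mpr hu_norm
  have hℓu : ℓ u = ∑ j, (‖ℓ (Pi.single j 1)‖ : 𝕜) := by
    conv_lhs => rw [pi_eq_sum_univ' u]
    simp [map_sum, hu_mul]
  calc ∑ j, ‖ℓ (Pi.single j 1)‖ = ‖ℓ u‖ := by
        rw [hℓu, ← RCLike.ofReal_sum, RCLike.norm_ofReal, abs_of_nonneg (by positivity)]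
    _ ≤ ‖ℓ‖ * ‖u‖ := ℓ.le_opNorm u
    _ ≤ ‖ℓ‖ := mul_le_of_le_one_right (norm_nonneg ℓ) hu

/-- For `f : 𝔻^d → 𝔻` holomorphic with `f(0) = 0`, the sum of the absolute values
of the partial derivatives of `f` at `0` is at most `1`. -/
theorem sum_abs_partial_deriv_le_one
    (d : ℕ) (f : (Fin d → ℂ) → ℂ)
    (hf : DifferentiableOn ℂ f (polydisc d))
    (hmap : ∀ z ∈ polydisc d, ‖f z‖ < 1)
    (h0 : f 0 = 0) :
    ∑ j : Fin d, ‖fderiv ℂ f 0 (Pi.single j 1)‖ ≤ 1 := by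
  rw [polydisc_eq_ball] at hf hmap
  have hmaps : Set.MapsTo f (ball 0 1) (closedBall (f 0) 1) := fun z hz => by
    simpa [h0] using (hmap z hz).le
  exact (fderiv ℂ f 0).sum_norm_apply_single_le_opNorm.trans
    (Complex.norm_fderiv_le_one_of_mapsTo_ball hf hmaps one_pos)
end

section
/- Let T be a complex n×n matrix with ‖T‖ ≤ 1 (operator norm). Then for every complex polynomial p in one variable, ‖p(T)‖ ≤ sup_{|z|=1} |p(z)| (von Neumann's inequality for matrices). -/
/-!
If `‖T‖ ≤ 1`, the defect operators `D = √(1 - T⋆T)` and `D' = √(1 - TT⋆)` satisfy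
`T D = D' T`. With them, Egerváry's block matrix `W`, whose first block column is
`(T, D, 0, …, 0)`, whose last is `(D', -T⋆, 0, …, 0)` and which shifts the remaining blocks
down by one, is unitary, and its powers `W ^ k` with `k ≤ deg p` have `T ^ k` in the top-left
corner. Hence `p(T)` is a corner of `p(W)`, so `‖p(T)‖ ≤ ‖p(W)‖`, and since the spectrum of the
unitary `W` lies on the unit circle, the functional calculus gives
`‖p(W)‖ ≤ sup_{|z| = 1} |p(z)|`.
-/

/-- The operator norm of a matrix acting on Euclidean space `ℂ^n`. -/
noncomputable def opNorm {n : ℕ} (T : Matrix (Fin n) (Fin n) ℂ) : ℝ :=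
  ‖(Matrix.toEuclideanCLM (𝕜 := ℂ) T :
      EuclideanSpace ℂ (Fin n) →L[ℂ] EuclideanSpace ℂ (Fin n))‖

open Polynomial Matrix

section CStarAlgebra

variable {A : Type*} [CStarAlgebra A]

theorem SemiconjBy.cfc_real {x a b : A} (h : SemiconjBy x a b) (ha : IsSelfAdjoint a)
    (hb : IsSelfAdjoint b) (f : ℝ → ℝ) (hf : ContinuousOn f (spectrum ℝ a ∪ spectrum ℝ b)) :
    SemiconjBy x (cfc f a) (cfc f b) := by
  set s := spectrum ℝ a ∪ spectrum ℝ b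
  have : CompactSpace s :=
    isCompact_iff_compactSpace.mp ((spectrum.isCompact a).union (spectrum.isCompact b))
  let φa : C(s, ℝ) →⋆ₐ[ℝ] A := (cfcHom ha).comp
    (ContinuousMap.compStarAlgHom' ℝ ℝ ⟨Set.inclusion Set.subset_union_left, by fun_prop⟩)
  let φb : C(s, ℝ) →⋆ₐ[ℝ] A := (cfcHom hb).comp
    (ContinuousMap.compStarAlgHom' ℝ ℝ ⟨Set.inclusion Set.subset_union_right, by fun_prop⟩)
  have hφa : Continuous φa := (cfcHom_continuous ha).comp (ContinuousMap.continuous_precomp _)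
  have hφb : Continuous φb := (cfcHom_continuous hb).comp (ContinuousMap.continuous_precomp _)
  have hφa_id : φa (.restrict s (.id ℝ)) = a := cfcHom_id ha
  have hφb_id : φb (.restrict s (.id ℝ)) = b := cfcHom_id hb
  -- Both functional calculi are evaluated on the common compact set `s`, where polynomials
  -- are dense (Stone–Weierstrass).
  have key : ∀ g : C(s, ℝ), SemiconjBy x (φa g) (φb g) := by
    intro g
    induction g using ContinuousMap.induction_on_of_compact with
    | const r =>
      rw [show ContinuousMap.const s r = algebraMap ℝ C(s, ℝ) r from rfl,
        AlgHomClass.commutes, AlgHomClass.commutes]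
      exact Algebra.commute_algebraMap_right r x
    | id => rwa [hφa_id, hφb_id]
    | star_id => rwa [star_trivial, hφa_id, hφb_id]
    | add g₁ g₂ h₁ h₂ => simpa only [map_add] using h₁.add_right h₂
    | mul g₁ g₂ h₁ h₂ => simpa only [map_mul] using h₁.mul_right h₂
    | frequently g hg =>
      exact isClosed_eq (continuous_const.mul hφa) (hφb.mul continuous_const)
        |>.mem_of_frequently_of_tendsto hg Filter.tendsto_id
  have hfa : ContinuousOn f (spectrum ℝ a) := hf.mono Set.subset_union_left
  have hfb : ContinuousOn f (spectrum ℝ b) := hf.mono Set.subset_union_right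
  rw [cfc_apply f a, cfc_apply f b]
  exact key ⟨s.domRestrict f, hf.domRestrict⟩

theorem norm_aeval_le_of_mem_unitary {U : A} (hU : U ∈ unitary A) (p : ℂ[X]) {M : ℝ}
    (hM : ∀ z : ℂ, ‖z‖ = 1 → ‖p.eval z‖ ≤ M) : ‖aeval U p‖ ≤ M := by
  have := isStarNormal_of_mem_unitary hU
  rw [← cfc_polynomial p U]
  refine norm_cfc_le ((norm_nonneg _).trans (hM 1 norm_one)) fun z hz => hM z ?_
  simpa using spectrum.subset_circle_of_unitary hU hz

end CStarAlgebra

section Defect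

structure IsDefectPair {R : Type*} [Ring R] [StarRing R] (T D D' : R) : Prop where
  isSelfAdjoint : IsSelfAdjoint D
  isSelfAdjoint' : IsSelfAdjoint D'
  mul_self : D * D = 1 - star T * T
  mul_self' : D' * D' = 1 - T * star T
  intertwines : T * D = D' * T

variable {A : Type*} [CStarAlgebra A] [PartialOrder A] [StarOrderedRing A]

theorem one_sub_star_mul_self_nonneg {T : A} (hT : ‖T‖ ≤ 1) : 0 ≤ 1 - star T * T := by
  refine sub_nonneg.mpr <|
    (CStarAlgebra.norm_le_one_iff_of_nonneg _ (star_mul_self_nonneg T)).mp ?_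
  rw [CStarRing.norm_star_mul_self]
  exact mul_le_one₀ hT (norm_nonneg T) hT

theorem exists_isDefectPair {T : A} (hT : ‖T‖ ≤ 1) : ∃ D D' : A, IsDefectPair T D D' := by
  have ha := one_sub_star_mul_self_nonneg hT
  have hb : 0 ≤ 1 - T * star T := by
    simpa using one_sub_star_mul_self_nonneg (T := star T) (by rwa [norm_star])
  have hab : SemiconjBy T (1 - star T * T) (1 - T * star T) := by
    simp only [SemiconjBy]
    noncomm_ring
  refine ⟨CFC.sqrt _, CFC.sqrt _, (CFC.sqrt_nonneg _).isSelfAdjoint,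
    (CFC.sqrt_nonneg _).isSelfAdjoint, CFC.sqrt_mul_sqrt_self _ ha, CFC.sqrt_mul_sqrt_self _ hb, ?_⟩
  rw [CFC.sqrt_eq_real_sqrt _ ha, CFC.sqrt_eq_real_sqrt _ hb, cfcₙ_eq_cfc, cfcₙ_eq_cfc]
  exact hab.cfc_real ha.isSelfAdjoint hb.isSelfAdjoint _ Real.continuous_sqrt.continuousOn

end Defect

section Dilation

variable {R : Type*} [Ring R] [StarRing R]

theorem permMatrix_mem_unitary {ι : Type*} [Fintype ι] [DecidableEq ι] (σ : Equiv.Perm ι) :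
    σ.permMatrix R ∈ unitary (Matrix ι ι R) := by
  rw [Unitary.mem_iff, star_eq_conjTranspose, conjTranspose_permMatrix, ← permMatrix_mul,
    ← permMatrix_mul]
  simp

theorem fromBlocks_mem_unitary {m n : Type*} [Fintype m] [Fintype n] [DecidableEq m]
    [DecidableEq n] {A : Matrix m m R} {B : Matrix n n R} (hA : A ∈ unitary _)
    (hB : B ∈ unitary _) : fromBlocks A 0 0 B ∈ unitary (Matrix (m ⊕ n) (m ⊕ n) R) := by
  rw [Unitary.mem_iff, star_eq_conjTranspose] at *
  simp [fromBlocks_conjTranspose, fromBlocks_multiply, hA.1, hA.2, hB.1, hB.2]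

/-- Halmos's unitary dilation `!![T, D'; D, -star T]` with its two columns swapped. -/
def halmosBlock (T D D' : R) : Matrix (Fin 2) (Fin 2) R := !![D', T; -star T, D]

theorem IsDefectPair.halmosBlock_mem_unitary {T D D' : R} (h : IsDefectPair T D D') :
    halmosBlock T D D' ∈ unitary (Matrix (Fin 2) (Fin 2) R) := by
  have hD := h.isSelfAdjoint.star_eq
  have hD' := h.isSelfAdjoint'.star_eq
  have h' : D * star T = star T * D' := by simpa [hD, hD'] using congr(star $(h.intertwines))
  rw [Unitary.mem_iff]
  constructor <;> ext i j <;> fin_cases i <;> fin_cases j <;>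
    simp [halmosBlock, Matrix.mul_apply, hD, hD', h.mul_self, h.mul_self', h.intertwines, h']

def blockEquiv (n : ℕ) : Fin 2 ⊕ Fin n ≃ Fin (n + 2) :=
  finSumFinEquiv.trans (finCongr (Nat.add_comm 2 n))

def blockShift (n : ℕ) : Equiv.Perm (Fin 2 ⊕ Fin n) :=
  (blockEquiv n).symm.permCongr (Equiv.subRight 1)

section BlockShift

variable {n : ℕ}

lemma blockEquiv_blockShift (x : Fin 2 ⊕ Fin n) :
    blockEquiv n (blockShift n x) = blockEquiv n x - 1 := by
  simp [blockShift, Equiv.permCongr_apply]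

@[simp] lemma val_blockEquiv_inl (i : Fin 2) : (blockEquiv n (.inl i) : ℕ) = i := by
  simp [blockEquiv]

@[simp] lemma val_blockEquiv_inr (j : Fin n) : (blockEquiv n (.inr j) : ℕ) = j + 2 := by
  simp [blockEquiv]

lemma blockEquiv_inl_zero : blockEquiv n (.inl 0) = 0 := Fin.ext (by simp)

lemma blockShift_inl_one : blockShift n (.inl 1) = .inl 0 := by
  apply (blockEquiv n).injective
  rw [blockEquiv_blockShift, blockEquiv_inl_zero, sub_eq_zero]
  exact Fin.ext (by simp)

lemma val_blockEquiv_blockShift_inl_zero :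
    (blockEquiv n (blockShift n (.inl 0)) : ℕ) = n + 1 := by
  rw [blockEquiv_blockShift, blockEquiv_inl_zero, zero_sub, Fin.coe_neg_one]

lemma val_blockEquiv_blockShift_inr (j : Fin n) :
    (blockEquiv n (blockShift n (.inr j)) : ℕ) = j + 1 := by
  rw [blockEquiv_blockShift, Fin.val_sub_one_of_ne_zero]
  · simp
  · exact fun h => by simpa using congr(Fin.val $h)

end BlockShift

/-- Egerváry's `(n + 2) × (n + 2)` block matrix: its first block column is `(T, D, 0, …, 0)`,
its last is `(D', -star T, 0, …, 0)`, and every other column is the next standard one. -/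
def egervaryDilation (n : ℕ) (T D D' : R) : Matrix (Fin 2 ⊕ Fin n) (Fin 2 ⊕ Fin n) R :=
  fromBlocks (halmosBlock T D D') 0 0 1 * (blockShift n).permMatrix R

variable {n : ℕ} {T D D' : R}

theorem IsDefectPair.egervaryDilation_mem_unitary (h : IsDefectPair T D D') :
    egervaryDilation n T D D' ∈ unitary (Matrix (Fin 2 ⊕ Fin n) (Fin 2 ⊕ Fin n) R) :=
  mul_mem (fromBlocks_mem_unitary h.halmosBlock_mem_unitary (one_mem _))
    (permMatrix_mem_unitary _)

lemma egervaryDilation_mulVec (u : Fin 2 ⊕ Fin n → R) :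
    egervaryDilation n T D D' *ᵥ u =
      fromBlocks (halmosBlock T D D') 0 0 1 *ᵥ (u ∘ blockShift n) := by
  rw [egervaryDilation, ← mulVec_mulVec, PEquiv.toMatrix_toPEquiv_mulVec]

lemma egervaryDilation_mulVec_inl_zero (u : Fin 2 ⊕ Fin n → R) :
    (egervaryDilation n T D D' *ᵥ u) (.inl 0) =
      D' * u (blockShift n (.inl 0)) + T * u (blockShift n (.inl 1)) := by
  rw [egervaryDilation_mulVec]
  simp [halmosBlock, mulVec, dotProduct, Fin.sum_univ_two]

lemma egervaryDilation_mulVec_inr (u : Fin 2 ⊕ Fin n → R) (j : Fin n) :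
    (egervaryDilation n T D D' *ᵥ u) (.inr j) = u (blockShift n (.inr j)) := by
  simp [egervaryDilation_mulVec, fromBlocks_mulVec]

/-- For `k ≤ n` the last block, which `W` feeds back into the first one through `D'`, is still
empty; this is what limits the corner identity to powers up to `n + 1`. -/
theorem egervaryDilation_pow_mulVec_single {k : ℕ} (hk : k ≤ n + 1) :
    (egervaryDilation n T D D' ^ k *ᵥ Pi.single (.inl 0) 1) (.inl 0) = T ^ k ∧
      ∀ x, k < (blockEquiv n x : ℕ) →
        (egervaryDilation n T D D' ^ k *ᵥ Pi.single (.inl 0) 1) x = 0 := by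
  induction k with
  | zero =>
    refine ⟨by simp, fun x hx => ?_⟩
    rw [pow_zero, one_mulVec, Pi.single_eq_of_ne]
    rintro rfl
    simp at hx
  | succ k ih =>
    obtain ⟨hcorner, hvanish⟩ := ih (by omega)
    rw [pow_succ', ← mulVec_mulVec]
    refine ⟨?_, ?_⟩
    · rw [egervaryDilation_mulVec_inl_zero, blockShift_inl_one, hcorner,
        hvanish _ (by rw [val_blockEquiv_blockShift_inl_zero]; omega), mul_zero, zero_add,
        pow_succ']
    · rintro (i | j) hx
      · rw [val_blockEquiv_inl] at hx
        omega
      · rw [egervaryDilation_mulVec_inr]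
        apply hvanish
        rw [val_blockEquiv_blockShift_inr]
        rw [val_blockEquiv_inr] at hx
        omega

theorem egervaryDilation_pow_apply_inl_zero {k : ℕ} (hk : k ≤ n + 1) :
    (egervaryDilation n T D D' ^ k) (.inl 0) (.inl 0) = T ^ k := by
  simpa [mulVec_single_one] using
    (egervaryDilation_pow_mulVec_single (T := T) (D := D) (D' := D') hk).1

theorem egervaryDilation_aeval_apply_inl_zero {S : Type*} [CommSemiring S] [Algebra S R]
    (p : S[X]) (hp : p.natDegree ≤ n + 1) :
    aeval (egervaryDilation n T D D') p (.inl 0) (.inl 0) = aeval T p := by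
  simp only [aeval_eq_sum_range, Matrix.sum_apply, Matrix.smul_apply]
  refine Finset.sum_congr rfl fun k hk => ?_
  rw [egervaryDilation_pow_apply_inl_zero (by simp at hk; omega)]

end Dilation

theorem norm_aeval_le_of_norm_le_one {A : Type*} [CStarAlgebra A] [PartialOrder A]
    [StarOrderedRing A] {T : A} (hT : ‖T‖ ≤ 1) (p : ℂ[X]) {M : ℝ}
    (hM : ∀ z : ℂ, ‖z‖ = 1 → ‖p.eval z‖ ≤ M) : ‖aeval T p‖ ≤ M := by
  obtain ⟨D, D', hD⟩ := exists_isDefectPair hT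
  let U : CStarMatrix (Fin 2 ⊕ Fin p.natDegree) (Fin 2 ⊕ Fin p.natDegree) A :=
    CStarMatrix.ofMatrixStarAlgEquiv (egervaryDilation p.natDegree T D D')
  have hU : U ∈ unitary _ := Unitary.map_mem _ hD.egervaryDilation_mem_unitary
  have hcorner : aeval U p (.inl 0) (.inl 0) = aeval T p := by
    simp only [U, aeval_algHom_apply]
    exact egervaryDilation_aeval_apply_inl_zero p (Nat.le_succ _)
  calc ‖aeval T p‖ = ‖aeval U p (.inl 0) (.inl 0)‖ := by rw [hcorner]
    _ ≤ ‖aeval U p‖ := CStarMatrix.norm_entry_le_norm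
    _ ≤ M := norm_aeval_le_of_mem_unitary hU p hM

open scoped Matrix.Norms.L2Operator MatrixOrder in
/-- von Neumann's inequality for a single contractive matrix. -/
theorem von_neumann_one_matrix
    (n : ℕ) (T : Matrix (Fin n) (Fin n) ℂ) (hT : opNorm T ≤ 1)
    (p : Polynomial ℂ) :
    opNorm (Polynomial.aeval T p) ≤
      sSup {x : ℝ | ∃ z : ℂ, ‖z‖ = 1 ∧ x = ‖p.eval z‖} := by
  obtain ⟨C, hC⟩ := (isCompact_sphere (0 : ℂ) 1).exists_bound_of_continuousOn
    p.continuous.continuousOn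
  have hbdd : BddAbove {x : ℝ | ∃ z : ℂ, ‖z‖ = 1 ∧ x = ‖p.eval z‖} := by
    refine ⟨C, ?_⟩
    rintro _ ⟨z, hz, rfl⟩
    simpa using hC z (by simpa using hz)
  exact norm_aeval_le_of_norm_le_one (A := Matrix (Fin n) (Fin n) ℂ) hT p
    fun z hz => le_csSup hbdd ⟨z, hz, rfl⟩
end

section
/- Let T be an n×n matrix with ‖T‖ < 1 and α ∈ D. Then the Möbius transform m_α(T) = (T − αI)(I − conj(α)T)^{−1} satisfies ‖m_α(T)‖ < 1. -/
/-!
For `y` and `x = (1 - ᾱ a) y` one has the exact identity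
`‖(a - α) y‖² + (1 - |α|²)(‖y‖² - ‖a y‖²) = ‖x‖²`. The second summand is at least
`K ‖y‖² ≥ K ‖x‖² / 4` with `K = (1 - |α|²)(1 - ‖a‖²) > 0`, so
`‖(a - α)(1 - ᾱ a)⁻¹‖² ≤ 1 - K / 4 < 1`.
-/

open scoped ComplexConjugate

theorem one_sub_sq_mul_one_sub_sq_mem_Icc {s t : ℝ} (hs₀ : 0 ≤ s) (hs₁ : s ≤ 1)
    (ht₀ : 0 ≤ t) (ht₁ : t ≤ 1) : 0 ≤ (1 - s ^ 2) * (1 - t ^ 2) ∧ (1 - s ^ 2) * (1 - t ^ 2) ≤ 1 :=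
  have hs : 0 ≤ 1 - s ^ 2 := sub_nonneg.2 (pow_le_one₀ hs₀ hs₁)
  have ht : 0 ≤ 1 - t ^ 2 := sub_nonneg.2 (pow_le_one₀ ht₀ ht₁)
  ⟨mul_nonneg hs ht, mul_le_one₀ (by nlinarith) ht (by nlinarith)⟩

section Mobius

variable {𝕜 E : Type*} [RCLike 𝕜] [NormedAddCommGroup E] [InnerProductSpace 𝕜 E]

theorem norm_sub_smul_sq_add_eq (u y : E) (α : 𝕜) :
    ‖u - α • y‖ ^ 2 + (1 - ‖α‖ ^ 2) * (‖y‖ ^ 2 - ‖u‖ ^ 2) = ‖y - conj α • u‖ ^ 2 := by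
  have hre : RCLike.re (α * inner 𝕜 u y) = RCLike.re (conj α * inner 𝕜 y u) := by
    rw [← RCLike.conj_re, map_mul, inner_conj_symm]
  rw [norm_sub_sq (𝕜 := 𝕜), norm_sub_sq (𝕜 := 𝕜), inner_smul_right, inner_smul_right,
    norm_smul, norm_smul, RCLike.norm_conj, hre]
  ring

theorem norm_apply_sub_smul_le (a : E →L[𝕜] E) (ha : ‖a‖ ≤ 1) (α : 𝕜) (hα : ‖α‖ ≤ 1) (y : E) :
    ‖a y - α • y‖ ≤ (1 - (1 - ‖α‖ ^ 2) * (1 - ‖a‖ ^ 2) / 8) * ‖y - conj α • a y‖ := by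
  set x := y - conj α • a y
  set K := (1 - ‖α‖ ^ 2) * (1 - ‖a‖ ^ 2)
  have hay : ‖a y‖ ≤ ‖a‖ * ‖y‖ := a.le_opNorm y
  have hK : 0 ≤ K ∧ K ≤ 1 := one_sub_sq_mul_one_sub_sq_mem_Icc (norm_nonneg α) hα
    (norm_nonneg a) ha
  have hx : ‖x‖ ≤ 2 * ‖y‖ :=
    calc ‖x‖ ≤ ‖y‖ + ‖α‖ * ‖a y‖ := by
          simpa only [norm_smul, RCLike.norm_conj] using norm_sub_le y (conj α • a y)
      _ ≤ 2 * ‖y‖ := by nlinarith [norm_nonneg α, norm_nonneg (a y), norm_nonneg y]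
  have hdefect : K * ‖y‖ ^ 2 ≤ (1 - ‖α‖ ^ 2) * (‖y‖ ^ 2 - ‖a y‖ ^ 2) := by
    have : (1 - ‖a‖ ^ 2) * ‖y‖ ^ 2 ≤ ‖y‖ ^ 2 - ‖a y‖ ^ 2 := by
      nlinarith [norm_nonneg (a y), norm_nonneg y, norm_nonneg a]
    simpa only [K, mul_assoc] using
      mul_le_mul_of_nonneg_left this (by nlinarith [norm_nonneg α] : 0 ≤ 1 - ‖α‖ ^ 2)
  -- `(1 - K / 8)² ≥ 1 - K / 4` avoids a square root in the bound.
  have hsq : ‖a y - α • y‖ ^ 2 ≤ ((1 - K / 8) * ‖x‖) ^ 2 := by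
    have hid : ‖a y - α • y‖ ^ 2 + (1 - ‖α‖ ^ 2) * (‖y‖ ^ 2 - ‖a y‖ ^ 2) = ‖x‖ ^ 2 :=
      norm_sub_smul_sq_add_eq (a y) y α
    nlinarith [mul_le_mul_of_nonneg_left (pow_le_pow_left₀ (norm_nonneg x) hx 2) hK.1,
      sq_nonneg (K * ‖x‖)]
  exact (pow_le_pow_iff_left₀ (norm_nonneg _)
    (mul_nonneg (by linarith [hK.2]) (norm_nonneg x)) two_ne_zero).mp hsq

theorem norm_sub_smul_one_mul_le (a r : E →L[𝕜] E) (ha : ‖a‖ ≤ 1) (α : 𝕜) (hα : ‖α‖ ≤ 1)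
    (hr : (1 - conj α • a) * r = 1) :
    ‖(a - α • 1) * r‖ ≤ 1 - (1 - ‖α‖ ^ 2) * (1 - ‖a‖ ^ 2) / 8 := by
  refine ContinuousLinearMap.opNorm_le_bound _ ?_ fun x => ?_
  · linarith [(one_sub_sq_mul_one_sub_sq_mem_Icc (norm_nonneg α) hα (norm_nonneg a) ha).2]
  · have hx : r x - conj α • a (r x) = x := by
      simpa using congr($hr x)
    simpa [hx] using norm_apply_sub_smul_le a ha α hα (r x)

end Mobius

/-- The Möbius transform of a strict contraction is a strict contraction:
`‖(T − αI)(I − conj(α)T)⁻¹‖ < 1` for `‖T‖ < 1`, `|α| < 1`. -/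
theorem mobius_of_strict_contraction
    (n : ℕ) (T : Matrix (Fin n) (Fin n) ℂ) (hT : opNorm T < 1)
    (α : ℂ) (hα : ‖α‖ < 1) :
    opNorm ((T - α • (1 : Matrix (Fin n) (Fin n) ℂ)) *
      ((1 : Matrix (Fin n) (Fin n) ℂ) - (starRingEnd ℂ) α • T)⁻¹) < 1 := by
  set φ := Matrix.toEuclideanCLM (𝕜 := ℂ) (n := Fin n)
  have hT' : ‖φ T‖ < 1 := hT
  have hS : IsUnit (1 - conj α • T) := by
    refine (isUnit_map_iff φ _).mp ?_
    have hsmall : ‖conj α • φ T‖ < 1 := by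
      rw [norm_smul, RCLike.norm_conj]
      nlinarith [norm_nonneg α, norm_nonneg (φ T)]
    simpa using isUnit_one_sub_of_norm_lt_one hsmall
  have hinv : (1 - conj α • φ T) * φ (1 - conj α • T)⁻¹ = 1 := by
    rw [← map_one φ, ← map_smul, ← map_sub, ← map_mul,
      Matrix.mul_nonsing_inv _ ((Matrix.isUnit_iff_isUnit_det _).mp hS)]
  have hK : 0 < (1 - ‖α‖ ^ 2) * (1 - ‖φ T‖ ^ 2) := by
    apply mul_pos <;> nlinarith [norm_nonneg α, norm_nonneg (φ T)]
  calc opNorm ((T - α • 1) * (1 - conj α • T)⁻¹)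
      = ‖(φ T - α • 1) * φ (1 - conj α • T)⁻¹‖ := by simp [opNorm, φ]
    _ ≤ 1 - (1 - ‖α‖ ^ 2) * (1 - ‖φ T‖ ^ 2) / 8 :=
      norm_sub_smul_one_mul_le _ _ hT'.le α hα.le hinv
    _ < 1 := by linarith
end
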